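/- arXiv:2105.07439 — 3 statements merged into one kernel-verified Lean document; each statement's English description precedes it below -/
import Mathlib

section
/- Assume (n, q) ≠ (1, 3). Let ψ : V → V be a bijective τ-semilinear map over F, for some field automorphism τ of F, such that for every σ ∈ Gal(K/F) and every f ∈ F∖{0} there exist σ′ ∈ Gal(K/F) and f′ ∈ F∖{0} with {ψ(J^σ(k)) : k ∈ K, N(k) = f} = {J^{σ′}(k′) : k′ ∈ K, N(k′) = f′} (that is, ψ permutes the collection of norm surfaces 𝒥 = {𝒥^σ_f : σ ∈ Gal(K/F), f ∈ F∖{0}}, where 𝒥^σ_f = {J^σ(k) : N(k) = f}). Then there exist a field automorphism μ of K and σ ∈ Gal(K/F) such that either there exist a, d ∈ K∖{0} with ψ(x, y) = (a·μ(x), σ(d·μ(y))) for all x, y ∈ K, or there exist b, c ∈ K∖{0} with ψ(x, y) = (c·μ(y), σ(b·μ(x))) for all x, y ∈ K. -/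
/-!
The lines `J(k)`, `k ≠ 0`, cover exactly the vectors whose coordinates are both zero or both
nonzero. Since `ψ` maps each of them onto some `J^σ'(k')`, `k' ≠ 0`, it maps that set into,
hence (by finiteness) onto itself, so it maps the axes into the axes. Additivity then forces
`ψ(x, y) = (g x, h y)` or `ψ(x, y) = (g y, h x)` with `g`, `h` additive bijections; precomposing
with the swap of coordinates reduces the second case to the first. The line `J(m)` now gives
`g (m z) = c_m σ_m (h z)`, and comparing `m₁`, `m₂` and `m₁ + m₂` by Dedekind's independence of
characters shows that `σ_m` does not depend on `m`. Then `g (x y) g 1 = g x g y`, so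
`μ = g / g 1` is a field automorphism of `K`.
-/

/-- J^σ(k) = {(k·σ(x), x) : x ∈ K} -/
def JJ {K : Type} [Field K] (σ : K → K) (k : K) : Set (K × K) := {p | p.1 = k * σ p.2}

theorem MonoidHom.eq_of_forall_eq_mul_add_mul {G L : Type*} [Monoid G] [Field L]
    (σ₁ σ₂ σ₃ : G →* L) {c₁ c₂ c₃ : L} (hc₁ : c₁ ≠ 0) (hc₂ : c₂ ≠ 0)
    (h : ∀ w, c₃ * σ₃ w = c₁ * σ₁ w + c₂ * σ₂ w) : σ₁ = σ₂ := by
  by_contra hne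
  have hpair :=
    (LinearIndepOn.pair_iff _ hne).mp ((linearIndependent_monoidHom G L).linearIndepOn _)
  suffices ∀ w, σ₁ w = σ₃ w ∧ σ₂ w = σ₃ w from
    hne (MonoidHom.ext fun w ↦ (this w).1.trans (this w).2.symm)
  intro w
  -- comparing the relation at `z * w` with `σ₃ w` times the relation at `z` eliminates `σ₃`
  have hrel : (c₁ * (σ₁ w - σ₃ w)) • (σ₁ : G → L) + (c₂ * (σ₂ w - σ₃ w)) • (σ₂ : G → L) = 0 := by
    funext z
    have hzw := h (z * w)
    simp only [map_mul] at hzw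
    simp only [Pi.add_apply, Pi.smul_apply, smul_eq_mul, Pi.zero_apply]
    linear_combination σ₃ w * h z - hzw
  obtain ⟨h₁, h₂⟩ := hpair _ _ hrel
  exact ⟨sub_eq_zero.mp ((mul_eq_zero.mp h₁).resolve_left hc₁),
    sub_eq_zero.mp ((mul_eq_zero.mp h₂).resolve_left hc₂)⟩

theorem AddMonoidHom.forall_snd_eq_zero_or_forall_fst_eq_zero {A M N : Type*} [AddZeroClass A]
    [AddZeroClass M] [AddZeroClass N] (φ : A →+ M × N) (h : ∀ x, (φ x).1 = 0 ∨ (φ x).2 = 0) :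
    (∀ x, (φ x).2 = 0) ∨ ∀ x, (φ x).1 = 0 := by
  refine or_iff_not_imp_left.mpr fun hsnd x ↦ ?_
  obtain ⟨x₀, hx₀⟩ := not_forall.mp hsnd
  by_contra hx
  have hsum := map_add φ x x₀
  rcases h (x + x₀) with h' | h'
  · simp [hsum, (h x₀).resolve_right hx₀, hx] at h'
  · simp [hsum, (h x).resolve_left hx, hx₀] at h'

theorem AddMonoidHom.exists_eq_prodMk_or_swap {M : Type*} [AddCommMonoid M] [Nontrivial M]
    (ψ : M × M →+ M × M) (hψ : Function.Surjective ψ)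
    (haxes : ∀ p : M × M, p.1 = 0 ∨ p.2 = 0 → (ψ p).1 = 0 ∨ (ψ p).2 = 0) :
    ∃ g h : M →+ M, (∀ x y, ψ (x, y) = (g x, h y)) ∨ ∀ x y, ψ (x, y) = (g y, h x) := by
  have hsplit : ∀ x y, ψ (x, y) = ψ (x, 0) + ψ (0, y) := fun x y ↦ by
    rw [← map_add, Prod.mk_add_mk, add_zero, zero_add]
  obtain ⟨m, hm⟩ := exists_ne (0 : M)
  rcases (ψ.comp (inl M M)).forall_snd_eq_zero_or_forall_fst_eq_zero
      (fun x ↦ haxes _ (Or.inr rfl)) with h₁ | h₁ <;>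
    rcases (ψ.comp (inr M M)).forall_snd_eq_zero_or_forall_fst_eq_zero
      (fun y ↦ haxes _ (Or.inl rfl)) with h₂ | h₂ <;>
    simp only [comp_apply, inl_apply, inr_apply] at h₁ h₂
  · obtain ⟨⟨x, y⟩, hxy⟩ := hψ (0, m)
    exact (hm (by simpa [hsplit x y, h₁, h₂] using congrArg Prod.snd hxy.symm)).elim
  · exact ⟨(fst M M).comp (ψ.comp (inl M M)), (snd M M).comp (ψ.comp (inr M M)),
      Or.inl fun x y ↦ by ext <;> simp [hsplit x y, h₁, h₂]⟩
  · exact ⟨(fst M M).comp (ψ.comp (inr M M)), (snd M M).comp (ψ.comp (inl M M)),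
      Or.inr fun x y ↦ by ext <;> simp [hsplit x y, h₁, h₂]⟩
  · obtain ⟨⟨x, y⟩, hxy⟩ := hψ (m, 0)
    exact (hm (by simpa [hsplit x y, h₁, h₂] using congrArg Prod.fst hxy.symm)).elim

theorem AddMonoidHom.exists_ringEquiv_of_map_mul {K : Type*} [Field K] [Finite K] (g : K →+ K)
    (hg₁ : g 1 ≠ 0) (hmul : ∀ x y, g (x * y) * g 1 = g x * g y) :
    ∃ μ : K ≃+* K, ∀ x, g x = g 1 * μ x := by
  let μ : K →+* K :=
    { toFun := fun x ↦ (g 1)⁻¹ * g x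
      map_one' := inv_mul_cancel₀ hg₁
      map_mul' := fun x y ↦ by
        field_simp
        linear_combination hmul x y
      map_zero' := by simp
      map_add' := fun x y ↦ by simp [mul_add] }
  refine ⟨.ofBijective μ (Finite.injective_iff_bijective.mp μ.injective), fun x ↦ ?_⟩
  simp [μ, hg₁]

section FunctionalEquation

variable {F K : Type*} [Field F] [Field K] [Algebra F K]

theorem algEquiv_eq_of_map_mul_eq_mul {g h : K →+ K} (hg : Function.Injective g)
    (hh : Function.Surjective h)
    (hl : ∀ m ≠ 0, ∃ (σ : K ≃ₐ[F] K) (c : K), ∀ z, g (m * z) = c * σ (h z))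
    {m₁ m₂ c₁ c₂ : K} {σ₁ σ₂ : K ≃ₐ[F] K} (hm₁ : m₁ ≠ 0) (hm₂ : m₂ ≠ 0) (hm : m₁ + m₂ ≠ 0)
    (h₁ : ∀ z, g (m₁ * z) = c₁ * σ₁ (h z)) (h₂ : ∀ z, g (m₂ * z) = c₂ * σ₂ (h z)) :
    σ₁ = σ₂ := by
  have hc : ∀ {m c : K} {σ : K ≃ₐ[F] K}, m ≠ 0 → (∀ z, g (m * z) = c * σ (h z)) → c ≠ 0 :=
    fun hm hmc hc ↦ hm (hg (by simpa [hc] using hmc 1))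
  obtain ⟨σ₃, c₃, h₃⟩ := hl _ hm
  have key := MonoidHom.eq_of_forall_eq_mul_add_mul (σ₁ : K →* K) σ₂ σ₃ (hc hm₁ h₁) (hc hm₂ h₂)
    (c₃ := c₃) fun w ↦ by
      obtain ⟨z, rfl⟩ := hh w
      simpa [add_mul, h₁, h₂] using (h₃ z).symm
  exact AlgEquiv.ext fun x ↦ DFunLike.congr_fun key x

theorem exists_algEquiv_forall_map_mul_eq_mul [Fintype K] (hK : 3 < Fintype.card K)
    {g h : K →+ K} (hg : Function.Injective g) (hh : Function.Surjective h)
    (hl : ∀ m ≠ 0, ∃ (σ : K ≃ₐ[F] K) (c : K), ∀ z, g (m * z) = c * σ (h z)) :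
    ∃ α : K ≃ₐ[F] K, ∀ m ≠ 0, ∃ c : K, ∀ z, g (m * z) = c * α (h z) := by
  obtain ⟨α, c₁, h₁⟩ := hl 1 one_ne_zero
  refine ⟨α, fun m hm ↦ ?_⟩
  obtain ⟨σ, c, hσ⟩ := hl m hm
  suffices σ = α from ⟨c, this ▸ hσ⟩
  by_cases hm₁ : m + 1 = 0
  · classical
    -- here `m = -1`, and any third nonzero `t` has nonzero sums with both `m` and `1`
    obtain ⟨t, -, ht⟩ := Finset.exists_mem_notMem_of_card_lt_card (s := ({0, 1, m} : Finset K))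
      (t := Finset.univ) ((Finset.card_le_three).trans_lt hK)
    simp only [Finset.mem_insert, Finset.mem_singleton, not_or] at ht
    obtain ⟨ht₀, ht₁, htm⟩ := ht
    obtain ⟨σt, ct, hσt⟩ := hl t ht₀
    have hmt : m + t ≠ 0 := fun h ↦ ht₁ (by linear_combination h - hm₁)
    have ht1 : t + 1 ≠ 0 := fun h ↦ htm (by linear_combination h - hm₁)
    exact (algEquiv_eq_of_map_mul_eq_mul hg hh hl hm ht₀ hmt hσ hσt).trans
      (algEquiv_eq_of_map_mul_eq_mul hg hh hl ht₀ one_ne_zero ht1 hσt h₁)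
  · exact algEquiv_eq_of_map_mul_eq_mul hg hh hl hm one_ne_zero hm₁ hσ h₁

theorem exists_ringEquiv_algEquiv_of_map_mul_eq_mul [Fintype K] (hK : 3 < Fintype.card K)
    {g h : K →+ K} (hg : Function.Injective g) (hh : Function.Injective h)
    (hl : ∀ m ≠ 0, ∃ (σ : K ≃ₐ[F] K) (c : K), ∀ z, g (m * z) = c * σ (h z)) :
    ∃ (μ : K ≃+* K) (σ : K ≃ₐ[F] K) (a d : K), a ≠ 0 ∧ d ≠ 0 ∧
      (∀ x, g x = a * μ x) ∧ ∀ y, h y = σ (d * μ y) := by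
  obtain ⟨α, hα⟩ :=
    exists_algEquiv_forall_map_mul_eq_mul hK hg (Finite.surjective_of_injective hh) hl
  have hg₁ : g 1 ≠ 0 := (map_ne_zero_iff g hg).mpr one_ne_zero
  obtain ⟨c₁, hc₁⟩ := hα 1 one_ne_zero
  simp only [one_mul] at hc₁
  have hmul : ∀ x y, g (x * y) * g 1 = g x * g y := fun x y ↦ by
    rcases eq_or_ne x 0 with rfl | hx
    · simp
    obtain ⟨c, hc⟩ := hα x hx
    have hx₁ := hc 1
    rw [mul_one] at hx₁
    rw [hc, hx₁, hc₁, hc₁]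
    ring
  obtain ⟨μ, hμ⟩ := g.exists_ringEquiv_of_map_mul hg₁ hmul
  have hc₁0 : c₁ ≠ 0 := fun h ↦ hg₁ (by rw [hc₁, h, zero_mul])
  refine ⟨μ, α.symm, g 1, α (h 1), hg₁, ?_, hμ, fun y ↦ α.injective ?_⟩
  · simpa using (map_ne_zero_iff h hh).mpr one_ne_zero
  · rw [AlgEquiv.apply_symm_apply]
    apply mul_left_cancel₀ hc₁0
    rw [← hc₁, hμ, hc₁, mul_assoc]

end FunctionalEquation

section Lines

variable {F K : Type} [Field F] [Field K] [Algebra F K]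

variable (F) in
def PreservesLines (ψ : K × K → K × K) : Prop :=
  ∀ k : K, k ≠ 0 → ∃ (σ : K ≃ₐ[F] K) (k' : K), k' ≠ 0 ∧ ψ '' JJ id k = JJ σ k'

theorem mem_JJ_id_div {p : K × K} (hp : p.2 ≠ 0) : p ∈ JJ id (p.1 / p.2) :=
  (div_mul_cancel₀ _ hp).symm

theorem fst_eq_zero_iff_snd_eq_zero_of_mem_JJ {σ : K ≃ₐ[F] K} {k : K} (hk : k ≠ 0) {p : K × K}
    (hp : p ∈ JJ σ k) : p.1 = 0 ↔ p.2 = 0 := by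
  rw [show p.1 = k * σ p.2 from hp]
  simp [hk]

theorem image_swap_JJ_id {k : K} (hk : k ≠ 0) : Prod.swap '' JJ id k = JJ id k⁻¹ := by
  ext ⟨x, y⟩
  simp only [Set.image_swap_eq_preimage_swap, Set.mem_preimage, Prod.swap_prod_mk, JJ,
    Set.mem_ofPred_eq, id]
  rw [eq_inv_mul_iff_mul_eq₀ hk, eq_comm]

namespace PreservesLines

variable {ψ : K × K → K × K}

theorem comp_swap (hψ : PreservesLines F ψ) : PreservesLines F (ψ ∘ Prod.swap) := fun k hk ↦ by
  rw [Set.image_comp, image_swap_JJ_id hk]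
  exact hψ k⁻¹ (inv_ne_zero hk)

/-- The points with both or no coordinates zero form the union of the lines `J(k)`, `k ≠ 0`. -/
theorem mapsTo (hψ : PreservesLines F ψ) (hψ₀ : ψ 0 = 0) :
    Set.MapsTo ψ {p | p.1 = 0 ↔ p.2 = 0} {p | p.1 = 0 ↔ p.2 = 0} := by
  intro p hp
  by_cases hp₂ : p.2 = 0
  · rw [show p = 0 from Prod.ext (hp.mpr hp₂) hp₂, hψ₀]
    simp
  obtain ⟨σ, k', hk', himg⟩ := hψ _ (div_ne_zero (mt hp.mp hp₂) hp₂)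
  exact fst_eq_zero_iff_snd_eq_zero_of_mem_JJ hk'
    (himg ▸ Set.mem_image_of_mem ψ (mem_JJ_id_div hp₂))

theorem fst_eq_zero_or_snd_eq_zero [Finite K] (hψ : PreservesLines F ψ) (hψ₀ : ψ 0 = 0)
    (hbij : Function.Bijective ψ) (p : K × K) (hp : p.1 = 0 ∨ p.2 = 0) :
    (ψ p).1 = 0 ∨ (ψ p).2 = 0 := by
  by_cases hpS : p.1 = 0 ↔ p.2 = 0
  · rw [show p = 0 from Prod.ext (by tauto) (by tauto), hψ₀]
    simp
  have hcompl := (((Set.toFinite _).injOn_iff_bijOn_of_mapsTo (hψ.mapsTo hψ₀)).mp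
    hbij.injective.injOn).compl hbij
  have hψp := hcompl.mapsTo hpS
  simp only [Set.mem_compl_iff, Set.mem_ofPred_eq] at hψp
  tauto

theorem map_mul_eq_mul (hψ : PreservesLines F ψ) {g h : K → K}
    (hgh : ∀ x y, ψ (x, y) = (g x, h y)) :
    ∀ m ≠ 0, ∃ (σ : K ≃ₐ[F] K) (c : K), ∀ z, g (m * z) = c * σ (h z) := fun m hm ↦ by
  obtain ⟨σ, k', -, himg⟩ := hψ m hm
  refine ⟨σ, k', fun z ↦ ?_⟩
  have hmem : ψ (m * z, z) ∈ JJ σ k' := himg ▸ Set.mem_image_of_mem ψ (rfl : (m * z, z) ∈ JJ id m)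
  rwa [hgh] at hmem

theorem exists_of_eq_prodMk [Fintype K] (hK : 3 < Fintype.card K) (hψ : PreservesLines F ψ)
    (hinj : Function.Injective ψ) {g h : K →+ K} (hgh : ∀ x y, ψ (x, y) = (g x, h y)) :
    ∃ (μ : K ≃+* K) (σ : K ≃ₐ[F] K) (a d : K), a ≠ 0 ∧ d ≠ 0 ∧
      ∀ x y, ψ (x, y) = (a * μ x, σ (d * μ y)) := by
  have hg : Function.Injective g := fun x y hxy ↦
    congrArg Prod.fst (@hinj (x, 0) (y, 0) (by rw [hgh, hgh, hxy]))
  have hh : Function.Injective h := fun x y hxy ↦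
    congrArg Prod.snd (@hinj (0, x) (0, y) (by rw [hgh, hgh, hxy]))
  obtain ⟨μ, σ, a, d, ha, hd, hga, hhd⟩ :=
    exists_ringEquiv_algEquiv_of_map_mul_eq_mul hK hg hh (hψ.map_mul_eq_mul hgh)
  exact ⟨μ, σ, a, d, ha, hd, fun x y ↦ by rw [hgh, hga, hhd]⟩

end PreservesLines

end Lines

theorem stmt_2_general
    (q n : ℕ) (hq : 2 < q) (hn : 1 ≤ n)
    (F K : Type) [Field F] [Field K] [Algebra F K] [Fintype K]
    (hcK : Fintype.card K = q ^ (n + 1))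
    (ψ : K × K → K × K)
    (hbij : Function.Bijective ψ)
    (hadd : ∀ u v : K × K, ψ (u + v) = ψ u + ψ v)
    (hJ : ∀ (σ : K ≃ₐ[F] K) (f : F), f ≠ 0 →
      ∃ (σ' : K ≃ₐ[F] K) (f' : F), f' ≠ 0 ∧
        (fun W => ψ '' W) '' {W | ∃ k : K, Algebra.norm F k = f ∧ W = JJ (⇑σ) k}
          = {W | ∃ k' : K, Algebra.norm F k' = f' ∧ W = JJ (⇑σ') k'}) :
    ∃ (μ : K ≃+* K) (σ : K ≃ₐ[F] K),
      (∃ a d : K, a ≠ 0 ∧ d ≠ 0 ∧ ∀ x y : K, ψ (x, y) = (a * μ x, σ (d * μ y))) ∨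
      (∃ b c : K, b ≠ 0 ∧ c ≠ 0 ∧ ∀ x y : K, ψ (x, y) = (c * μ y, σ (b * μ x))) := by
  have hK : 3 < Fintype.card K := by
    rw [hcK]
    calc 3 < 3 ^ 2 := by norm_num
      _ ≤ q ^ 2 := Nat.pow_le_pow_left hq 2
      _ ≤ q ^ (n + 1) := Nat.pow_le_pow_right (by omega) (by omega)
  have hψ : PreservesLines F ψ := fun k hk ↦ by
    obtain ⟨σ', f', hf', hset⟩ := hJ .refl (Algebra.norm F k) (Algebra.norm_ne_zero_iff.mpr hk)
    obtain ⟨k', hk'f, hk'⟩ : ψ '' JJ id k ∈ {W | ∃ k' : K, Algebra.norm F k' = f' ∧ W = JJ σ' k'} :=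
      hset ▸ ⟨_, ⟨k, rfl, rfl⟩, rfl⟩
    exact ⟨σ', k', Algebra.norm_ne_zero_iff.mp (hk'f ▸ hf'), hk'⟩
  let Ψ : K × K →+ K × K := AddMonoidHom.mk' ψ hadd
  obtain ⟨g, h, hgh | hgh⟩ :=
    Ψ.exists_eq_prodMk_or_swap hbij.2 (hψ.fst_eq_zero_or_snd_eq_zero Ψ.map_zero hbij)
  · obtain ⟨μ, σ, a, d, ha, hd, hψad⟩ := hψ.exists_of_eq_prodMk hK hbij.1 hgh
    exact ⟨μ, σ, .inl ⟨a, d, ha, hd, hψad⟩⟩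
  · obtain ⟨μ, σ, a, d, ha, hd, hψad⟩ :=
      hψ.comp_swap.exists_of_eq_prodMk hK (hbij.1.comp Prod.swap_injective) fun x y ↦ hgh y x
    exact ⟨μ, σ, .inr ⟨d, a, hd, ha, fun x y ↦ hψad y x⟩⟩

theorem stmt_2
    (q n : ℕ) (hq : 2 < q) (hqp : IsPrimePow q) (hn : 1 ≤ n)
    (hne : (n, q) ≠ (1, 3))
    (F K : Type) [Field F] [Field K] [Algebra F K] [Fintype F] [Fintype K]
    (hcF : Fintype.card F = q) (hcK : Fintype.card K = q ^ (n + 1))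
    (τ : F ≃+* F) (ψ : K × K → K × K)
    (hbij : Function.Bijective ψ)
    (hadd : ∀ u v : K × K, ψ (u + v) = ψ u + ψ v)
    (hsem : ∀ (f : F) (v : K × K), ψ (f • v) = τ f • ψ v)
    (hJ : ∀ (σ : K ≃ₐ[F] K) (f : F), f ≠ 0 →
      ∃ (σ' : K ≃ₐ[F] K) (f' : F), f' ≠ 0 ∧
        (fun W => ψ '' W) '' {W | ∃ k : K, Algebra.norm F k = f ∧ W = JJ (⇑σ) k}
          = {W | ∃ k' : K, Algebra.norm F k' = f' ∧ W = JJ (⇑σ') k'}) :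
    ∃ (μ : K ≃+* K) (σ : K ≃ₐ[F] K),
      (∃ a d : K, a ≠ 0 ∧ d ≠ 0 ∧ ∀ x y : K, ψ (x, y) = (a * μ x, σ (d * μ y))) ∨
      (∃ b c : K, b ≠ 0 ∧ c ≠ 0 ∧ ∀ x y : K, ψ (x, y) = (c * μ y, σ (b * μ x))) :=
  stmt_2_general q n hq hn F K hcK ψ hbij hadd hJ
end

section
/- Let c ∈ K and let f ∈ F∖{0}. Define C₁ = {x ∈ K : N(x) = 1} and C₂ = {x ∈ K : N(x − c) = f}. If C₁ is not a subset of C₂, then the cardinality of C₁ ∩ C₂ is at most 2·(q^n − 1)/(q − 1). -/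
/-!
Write `s = 1 + q + ⋯ + q^(n-1)`, so that `N(x - c) = ∏_{i ≤ n} (x^(q^i) - c^(q^i))` and
`N(x) = x^(s + q^n)`. On the norm-one circle `x^(q^n) = x⁻ˢ`, so `xˢ (N(x - c) - f)` is the value at
`x` of a fixed polynomial of degree at most `2s`. Every point of `C₁ ∩ C₂` is a root of it, and it is
not the zero polynomial, since otherwise every norm-one `x` would lie in `C₂`.
-/

open Polynomial Finset

section NormSubPoly

variable {R : Type*} [CommRing R] (q n : ℕ) (c a : R)

noncomputable def normSubPoly : R[X] :=
  (∏ i ∈ range n, (X ^ q ^ i - C (c ^ q ^ i))) * (1 - C (c ^ q ^ n) * X ^ ∑ i ∈ range n, q ^ i) -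
    C a * X ^ ∑ i ∈ range n, q ^ i

variable {q n} in
theorem eval_normSubPoly {x : R} (hx : ∏ i ∈ range (n + 1), x ^ q ^ i = 1) :
    (normSubPoly q n c a).eval x =
      x ^ (∑ i ∈ range n, q ^ i) * (∏ i ∈ range (n + 1), (x ^ q ^ i - c ^ q ^ i) - a) := by
  rw [prod_range_succ, prod_pow_eq_pow_sum] at hx
  simp only [normSubPoly, eval_sub, eval_mul, eval_prod, eval_pow, eval_X, eval_C, eval_one]
  rw [prod_range_succ]
  linear_combination (-∏ i ∈ range n, (x ^ q ^ i - c ^ q ^ i)) * hx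

theorem natDegree_normSubPoly_le :
    (normSubPoly q n c a).natDegree ≤ 2 * ∑ i ∈ range n, q ^ i := by
  set s := ∑ i ∈ range n, q ^ i
  have hA : (∏ i ∈ range n, (X ^ q ^ i - C (c ^ q ^ i))).natDegree ≤ s :=
    (natDegree_prod_le _ _).trans <| sum_le_sum fun i _ =>
      (natDegree_sub_le_of_le (natDegree_X_pow_le _) (natDegree_C _).le).trans (by simp)
  have hB : (1 - C (c ^ q ^ n) * X ^ s).natDegree ≤ s :=
    (natDegree_sub_le_of_le natDegree_one.le (natDegree_C_mul_X_pow_le _ _)).trans (by simp)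
  exact (natDegree_sub_le_of_le (natDegree_mul_le_of_le hA hB)
    (natDegree_C_mul_X_pow_le _ _)).trans (by omega)

end NormSubPoly

namespace FiniteField

variable {F K : Type*} [Field F] [Field K] [Algebra F K] [Fintype F] [Fintype K]

theorem sub_pow_card_pow {R : Type*} [CommRing R] [Algebra F R] (x c : R) (i : ℕ) :
    (x - c) ^ Fintype.card F ^ i = x ^ Fintype.card F ^ i - c ^ Fintype.card F ^ i := by
  simpa [AlgHom.coe_pow, coe_frobeniusAlgHom, pow_iterate] using
    map_sub (frobeniusAlgHom F R ^ i) x c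

theorem eval_normSubPoly_of_norm_eq_one {n : ℕ} (hn : Module.finrank F K = n + 1) (c : K) (f : F)
    {x : K} (hx : Algebra.norm F x = 1) :
    (normSubPoly (Fintype.card F) n c (algebraMap F K f)).eval x =
      x ^ (∑ i ∈ range n, Fintype.card F ^ i) * algebraMap F K (Algebra.norm F (x - c) - f) := by
  have hx' := algebraMap_norm_eq_prod_pow F K x
  rw [hx, map_one, hn, Nat.card_eq_fintype_card] at hx'
  rw [eval_normSubPoly _ _ hx'.symm, map_sub, algebraMap_norm_eq_prod_pow, hn,
    Nat.card_eq_fintype_card]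
  simp only [sub_pow_card_pow]

theorem ncard_norm_eq_one_inter_norm_sub_eq_le {n : ℕ} (hn : Module.finrank F K = n + 1)
    (c : K) (f : F)
    (h : ¬ {x : K | Algebra.norm F x = 1} ⊆ {x | Algebra.norm F (x - c) = f}) :
    ({x : K | Algebra.norm F x = 1} ∩ {x | Algebra.norm F (x - c) = f}).ncard ≤
      2 * ∑ i ∈ range n, Fintype.card F ^ i := by
  set P := normSubPoly (Fintype.card F) n c (algebraMap F K f)
  have hP : P ≠ 0 := by
    refine fun hP => h fun x hx => ?_
    have hx0 : x ≠ 0 := by rintro rfl; simp at hx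
    have : P.eval x = _ := eval_normSubPoly_of_norm_eq_one hn c f hx
    rw [hP, eval_zero, eq_comm, mul_eq_zero, map_eq_zero_iff _ (algebraMap F K).injective,
      sub_eq_zero] at this
    exact this.resolve_left (pow_ne_zero _ hx0)
  calc _ ≤ (P.rootSet K).ncard := by
        refine Set.ncard_le_ncard (fun x ⟨hx, hxc⟩ => ?_) (Set.toFinite _)
        rw [mem_rootSet_of_ne hP, coe_aeval_eq_eval, eval_normSubPoly_of_norm_eq_one hn c f hx,
          Set.mem_ofPred_eq.mp hxc, sub_self, map_zero, mul_zero]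
    _ ≤ P.natDegree := ncard_rootSet_le P K
    _ ≤ _ := natDegree_normSubPoly_le ..

end FiniteField

theorem stmt_4_general
    (q n : ℕ)
    (F K : Type) [Field F] [Field K] [Algebra F K] [Fintype F] [Fintype K]
    (hcF : Fintype.card F = q) (hcK : Fintype.card K = q ^ (n + 1))
    (c : K) (f : F)
    (C₁ C₂ : Set K)
    (hC₁ : C₁ = {x : K | Algebra.norm F x = 1})
    (hC₂ : C₂ = {x : K | Algebra.norm F (x - c) = f})
    (hns : ¬ C₁ ⊆ C₂) :
    (C₁ ∩ C₂).ncard ≤ 2 * ((q ^ n - 1) / (q - 1)) := by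
  subst hC₁ hC₂ hcF
  have hrank : Module.finrank F K = n + 1 :=
    Nat.pow_right_injective Fintype.one_lt_card (Module.card_eq_pow_finrank.symm.trans hcK)
  rw [← Nat.geomSum_eq Fintype.one_lt_card]
  exact FiniteField.ncard_norm_eq_one_inter_norm_sub_eq_le hrank c f hns

theorem stmt_4
    (q n : ℕ) (hq : 2 < q) (hqp : IsPrimePow q) (hn : 1 ≤ n)
    (F K : Type) [Field F] [Field K] [Algebra F K] [Fintype F] [Fintype K]
    (hcF : Fintype.card F = q) (hcK : Fintype.card K = q ^ (n + 1))
    (c : K) (f : F) (hf : f ≠ 0)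
    (C₁ C₂ : Set K)
    (hC₁ : C₁ = {x : K | Algebra.norm F x = 1})
    (hC₂ : C₂ = {x : K | Algebra.norm F (x - c) = f})
    (hns : ¬ C₁ ⊆ C₂) :
    (C₁ ∩ C₂).ncard ≤ 2 * ((q ^ n - 1) / (q - 1)) :=
  stmt_4_general q n F K hcF hcK c f C₁ C₂ hC₁ hC₂ hns
end

section
/- Let I ⊆ F∖{0} and define λ_q : V → V by λ_q(x, y) = (x, y^q). Then λ_q maps the set of subspaces A_I onto the set of subspaces A_{(F∖{0})∖I}; that is, {λ_q(W) : W ∈ A_I} = A_{(F∖{0})∖I}. -/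
/-!
Since `#K = q²`, the map `y ↦ y ^ q` is an involution of `K`, hence so is `λ_q`, and images
under `λ_q` are preimages. Taking preimages fixes `J(∞)` and `J(0)` and swaps `J(k)` with
`J^q(k)`; as `N(k) ≠ 0` for `k ≠ 0`, the condition `N(k) ∉ I` becomes `N(k) ∈ (F∖{0})∖I`.
-/

/-- J(∞) = {(x,0) : x ∈ K} -/
def Jinf (K : Type) [Field K] : Set (K × K) := {p | p.2 = 0}

/-- J(k) = {(k·x, x) : x ∈ K} -/
def J (K : Type) [Field K] (k : K) : Set (K × K) := {p | p.1 = k * p.2}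

/-- J^q(k) = {(k·x^q, x) : x ∈ K} -/
def Jq (K : Type) [Field K] (q : ℕ) (k : K) : Set (K × K) := {p | p.1 = k * p.2 ^ q}

/-- The two-dimensional André spread A_I. -/
def AndreSpread (F K : Type) [Field F] [Field K] [Algebra F K] (q : ℕ) (I : Set F) :
    Set (Set (K × K)) :=
  {Jinf K, J K 0}
    ∪ {W | ∃ k : K, k ≠ 0 ∧ Algebra.norm F k ∈ I ∧ W = Jq K q k}
    ∪ {W | ∃ k : K, k ≠ 0 ∧ Algebra.norm F k ∉ I ∧ W = J K k}

variable {K : Type} [Field K] {q : ℕ}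

def lambdaQ (K : Type) [Field K] (q : ℕ) (p : K × K) : K × K := (p.1, p.2 ^ q)

theorem lambdaQ_involutive (hfrob : ∀ y : K, (y ^ q) ^ q = y) :
    Function.Involutive (lambdaQ K q) := fun p => by
  simp [lambdaQ, hfrob]

theorem image_lambdaQ (hfrob : ∀ y : K, (y ^ q) ^ q = y) :
    Set.image (lambdaQ K q) = Set.preimage (lambdaQ K q) :=
  Set.image_eq_preimage_of_inverse (lambdaQ_involutive hfrob).leftInverse
    (lambdaQ_involutive hfrob).rightInverse

theorem preimage_lambdaQ_Jinf (hq : q ≠ 0) : lambdaQ K q ⁻¹' Jinf K = Jinf K := by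
  ext p
  simp [lambdaQ, Jinf, hq]

theorem preimage_lambdaQ_J (k : K) : lambdaQ K q ⁻¹' J K k = Jq K q k := rfl

theorem preimage_lambdaQ_Jq (hfrob : ∀ y : K, (y ^ q) ^ q = y) (k : K) :
    lambdaQ K q ⁻¹' Jq K q k = J K k := by
  ext p
  simp [lambdaQ, Jq, J, hfrob]

theorem Jq_zero : Jq K q 0 = J K 0 := by
  ext p
  simp [Jq, J]

theorem image_lambdaQ_andreSpread {F : Type} [Field F] [Algebra F K] [FiniteDimensional F K]
    (hq : q ≠ 0) (hfrob : ∀ y : K, (y ^ q) ^ q = y) (I : Set F) :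
    (fun W => lambdaQ K q '' W) '' AndreSpread F K q I
      = AndreSpread F K q ({f : F | f ≠ 0} \ I) := by
  have hnorm {k : K} (hk : k ≠ 0) : Algebra.norm F k ≠ 0 := Algebra.norm_ne_zero_iff.mpr hk
  simp only [image_lambdaQ hfrob]
  ext W
  simp only [AndreSpread, Set.mem_union, Set.mem_insert_iff, Set.mem_singleton_iff,
    Set.mem_ofPred_eq, Set.mem_image, Set.mem_sdiff]
  constructor
  · rintro ⟨W, (⟨(rfl | rfl) | ⟨k, hk, hkI, rfl⟩⟩ | ⟨k, hk, hkI, rfl⟩), rfl⟩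
    · exact Or.inl (Or.inl (Or.inl (preimage_lambdaQ_Jinf hq)))
    · exact Or.inl (Or.inl (Or.inr (by rw [preimage_lambdaQ_J, Jq_zero])))
    · exact Or.inr ⟨k, hk, fun h => h.2 hkI, preimage_lambdaQ_Jq hfrob k⟩
    · exact Or.inl (Or.inr ⟨k, hk, ⟨hnorm hk, hkI⟩, preimage_lambdaQ_J k⟩)
  · rintro ((⟨rfl | rfl⟩ | ⟨k, hk, hkI, rfl⟩) | ⟨k, hk, hkI, rfl⟩)
    · exact ⟨Jinf K, Or.inl (Or.inl (Or.inl rfl)), preimage_lambdaQ_Jinf hq⟩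
    · exact ⟨J K 0, Or.inl (Or.inl (Or.inr rfl)), by rw [preimage_lambdaQ_J, Jq_zero]⟩
    · exact ⟨J K k, Or.inr ⟨k, hk, hkI.2, rfl⟩, preimage_lambdaQ_J k⟩
    · refine ⟨Jq K q k, Or.inl (Or.inr ⟨k, hk, ?_, rfl⟩), preimage_lambdaQ_Jq hfrob k⟩
      by_contra h
      exact hkI ⟨hnorm hk, h⟩

theorem stmt_15_general
    (q : ℕ) (hq : 2 < q)
    (F K : Type) [Field F] [Field K] [Algebra F K] [Fintype K]
    (hcK : Fintype.card K = q ^ 2)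
    (I : Set F)
    (lam : K × K → K × K) (hlam : ∀ x y : K, lam (x, y) = (x, y ^ q)) :
    (fun W => lam '' W) '' AndreSpread F K q I
      = AndreSpread F K q ({f : F | f ≠ 0} \ I) := by
  obtain rfl : lam = lambdaQ K q := funext fun p => hlam p.1 p.2
  have hfrob (y : K) : (y ^ q) ^ q = y := by
    rw [← pow_mul, ← sq, ← hcK, FiniteField.pow_card]
  exact image_lambdaQ_andreSpread (by omega) hfrob I

theorem stmt_15
    (q : ℕ) (hq : 2 < q) (hqp : IsPrimePow q)
    (F K : Type) [Field F] [Field K] [Algebra F K] [Fintype F] [Fintype K]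
    (hcF : Fintype.card F = q) (hcK : Fintype.card K = q ^ 2)
    (I : Set F) (hIss : I ⊆ {f : F | f ≠ 0})
    (lam : K × K → K × K) (hlam : ∀ x y : K, lam (x, y) = (x, y ^ q)) :
    (fun W => lam '' W) '' AndreSpread F K q I
      = AndreSpread F K q ({f : F | f ≠ 0} \ I) :=
  stmt_15_general q hq F K hcK I lam hlam
end
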